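/- arXiv:1012.2778 — 3 statements merged into one kernel-verified Lean document; each statement's English description precedes it below -/
import Mathlib

section
/- Let n ≥ 2, let κ, κ_3, …, κ_n be real numbers, and let S be the linear endomorphism of an n-dimensional real vector space defined on a basis (E_1, …, E_n) by S E_1 = κ E_1 + E_2, S E_2 = κ E_2, and S E_i = κ_i E_i for i ≥ 3. Set κ_1 = κ_2 = κ. Then for every k = 0, …, n the Newton transformation satisfies: P_k E_1 = (−1)^k (μ_k^{\{1\}} E_1 − μ_{k−1}^{\{1,2\}} E_2), P_k E_2 = (−1)^k μ_k^{\{1\}} E_2, and P_k E_i = (−1)^k μ_k^{\{i\}} E_i for every i ≥ 3. -/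
/-!
In the basis `E` the operator `S` is lower triangular with diagonal `κ`, so its characteristic
polynomial is `∏ (X - κ i)` and `a k = (-1)^k μ_k^∅` by Vieta. Since `P_{k+1} = a_{k+1} + S P_k`,
on an eigenvector of eigenvalue `κ_i` the operator `P_k` acts by a scalar satisfying the same
recursion as `(-1)^k μ_k^{i}`, because `μ_k^J = μ_k^{J ∪ {i}} + κ_i μ_{k-1}^{J ∪ {i}}` for `i ∉ J`.
On the Jordan pair `E_1, E_2` the `E_2`-coefficient of `P_k E_1` obeys the analogous recursion,
solved by `-(-1)^k μ_{k-1}^{1,2}`.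
-/

/-- `mu κ J k` is the `k`-th elementary symmetric function of the values `κ i`
with indices `i` outside `J`, with the conventions `mu κ J 0 = 1` and
`mu κ J k = 0` for `k < 0`. -/
noncomputable def mu {n : ℕ} (κ : Fin n → ℝ) (J : Finset (Fin n)) (k : ℤ) : ℝ :=
  if k < 0 then 0
  else ∑ T ∈ (Finset.univ \ J).powersetCard k.toNat, ∏ i ∈ T, κ i

open Polynomial Finset

theorem Multiset.esymm_cons_succ {R : Type*} [CommSemiring R] (a : R) (s : Multiset R) (k : ℕ) :
    (a ::ₘ s).esymm (k + 1) = s.esymm (k + 1) + a * s.esymm k := by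
  simp [Multiset.esymm, Multiset.powersetCard_cons, Multiset.sum_map_mul_left]

theorem Matrix.charpoly_of_isLowerTriangular {R n : Type*} [CommRing R] [Fintype n]
    [DecidableEq n] [LinearOrder n] (M : Matrix n n R) (h : M.IsLowerTriangular) :
    M.charpoly = ∏ i : n, (X - C (M i i)) := by
  simp [Matrix.charpoly, Matrix.det_of_isLowerTriangular _ h.charmatrix]

section mu

variable {n : ℕ} (κ : Fin n → ℝ)

theorem mu_natCast (J : Finset (Fin n)) (k : ℕ) :
    mu κ J k = ((univ \ J).val.map κ).esymm k := by
  rw [Finset.esymm_map_val]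
  simp [mu]

theorem mu_eq_mu_insert_add_mul {J : Finset (Fin n)} {i : Fin n} (hi : i ∉ J) (k : ℤ) :
    mu κ J k = mu κ (insert i J) k + κ i * mu κ (insert i J) (k - 1) := by
  obtain hk | rfl | ⟨m, rfl⟩ : k < 0 ∨ k = 0 ∨ ∃ m : ℕ, k = m + 1 := by
    rcases k with (_ | m) | m <;> simp
  · simp [mu, hk, show k - 1 < 0 by omega]
  · simp [mu]
  · have hsdiff : univ \ J = insert i (univ \ insert i J) := by
      ext j; by_cases h : j = i <;> simp [h, hi]
    rw [add_sub_cancel_right, ← Nat.cast_succ, mu_natCast, mu_natCast, mu_natCast, hsdiff,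
      Finset.insert_val_of_notMem (by simp), Multiset.map_cons, Multiset.esymm_cons_succ]

theorem coeff_prod_X_sub_C_eq_mu {k : ℕ} (hk : k ≤ n) :
    (∏ i, (X - C (κ i))).coeff (n - k) = (-1) ^ k * mu κ ∅ k := by
  have hcard : Multiset.card (univ.val.map κ) = n := by simp
  rw [Finset.prod_eq_multiset_prod, ← Function.comp_def (fun t => X - C t) κ,
    ← Multiset.map_map, Multiset.prod_X_sub_C_coeff _ (by omega), hcard, Nat.sub_sub_self hk,
    mu_natCast, sdiff_empty]

end mu

theorem LinearMap.charpoly_eq_prod_of_sub_smul_mem_span {R M ι : Type*} [CommRing R]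
    [AddCommGroup M] [Module R M] [Module.Free R M] [Module.Finite R M]
    [Fintype ι] [DecidableEq ι] [LinearOrder ι] (E : Module.Basis ι R M) (f : M →ₗ[R] M)
    (κ : ι → R) (h : ∀ j, f (E j) - κ j • E j ∈ Submodule.span R (E '' Set.Ioi j)) :
    f.charpoly = ∏ i, (X - C (κ i)) := by
  have hrepr : ∀ i j, i ≤ j → E.repr (f (E j)) i = Finsupp.single j (κ j) i := by
    intro i j hij
    have hi : E.repr (f (E j) - κ j • E j) i = 0 :=
      Finsupp.notMem_support_iff.mp fun hs ↦ ((E.mem_span_image.mp (h j) hs) : j < i).not_ge hij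
    simpa [sub_eq_zero] using hi
  rw [← LinearMap.charpoly_toMatrix f E, Matrix.charpoly_of_isLowerTriangular]
  · simp [LinearMap.toMatrix_apply, hrepr]
  · intro i j (hij : i < j)
    rw [LinearMap.toMatrix_apply, hrepr i j hij.le, Finsupp.single_eq_of_ne hij.ne]

section Newton

variable {R A M : Type*} [CommSemiring R] [Semiring A] [Algebra R A]

/-- With `a k` the coefficient of `t ^ (n - k)` in the characteristic polynomial of `s`, this is
the `k`-th Newton transformation `P_k` of `s`. -/
def newtonTransformation (a : ℕ → R) (s : A) (k : ℕ) : A :=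
  ∑ j ∈ range (k + 1), a (k - j) • s ^ j

variable (a : ℕ → R)

theorem newtonTransformation_zero (s : A) : newtonTransformation a s 0 = a 0 • 1 := by
  simp [newtonTransformation]

theorem newtonTransformation_succ (s : A) (k : ℕ) :
    newtonTransformation a s (k + 1) = a (k + 1) • 1 + s * newtonTransformation a s k := by
  rw [newtonTransformation, sum_range_succ', newtonTransformation, mul_sum, add_comm]
  simp [pow_succ']

variable [AddCommMonoid M] [Module R M] {f : Module.End R M}

theorem newtonTransformation_apply_of_apply_eq_smul {v : M} {c : R} (hv : f v = c • v) (k : ℕ) :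
    newtonTransformation a f k v = newtonTransformation a c k • v := by
  induction k with
  | zero => simp [newtonTransformation_zero]
  | succ k ih =>
    rw [newtonTransformation_succ, newtonTransformation_succ]
    simp only [LinearMap.add_apply, LinearMap.smul_apply, Module.End.one_apply,
      Module.End.mul_apply, ih, map_smul, hv]
    module

theorem newtonTransformation_apply_of_jordan {e₀ e₁ : M} {c : R} (h₀ : f e₀ = c • e₀ + e₁)
    (h₁ : f e₁ = c • e₁) {d : ℕ → R} (hd₀ : d 0 = 0)
    (hd : ∀ k, d (k + 1) = newtonTransformation a c k + c * d k) (k : ℕ) :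
    newtonTransformation a f k e₀ = newtonTransformation a c k • e₀ + d k • e₁ := by
  induction k with
  | zero => simp [newtonTransformation_zero, hd₀]
  | succ k ih =>
    rw [newtonTransformation_succ, newtonTransformation_succ, hd]
    simp only [LinearMap.add_apply, LinearMap.smul_apply, Module.End.one_apply,
      Module.End.mul_apply, ih, map_add, map_smul, h₀, h₁]
    module

end Newton

section TypeIII

variable {n : ℕ} (κ : Fin n → ℝ)

theorem newtonTransformation_mu (i : Fin n) (k : ℕ) :
    newtonTransformation (fun j ↦ (-1) ^ j * mu κ ∅ j) (κ i) k = (-1) ^ k * mu κ {i} k := by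
  induction k with
  | zero => simp [newtonTransformation_zero, mu]
  | succ k ih =>
    rw [newtonTransformation_succ, ih, mu_eq_mu_insert_add_mul κ (notMem_empty i), insert_empty]
    push_cast
    simp only [smul_eq_mul, mul_one, add_sub_cancel_right]
    ring

theorem neg_one_pow_mul_neg_mu_pair_succ {i j : Fin n} (hij : i ≠ j) (hκ : κ i = κ j) (k : ℕ) :
    (-1) ^ (k + 1) * -mu κ {i, j} ((k + 1 : ℕ) - 1 : ℤ) =
      newtonTransformation (fun m ↦ (-1) ^ m * mu κ ∅ m) (κ i) k +
        κ i * ((-1) ^ k * -mu κ {i, j} (k - 1)) := by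
  rw [newtonTransformation_mu, mu_eq_mu_insert_add_mul κ (notMem_singleton.mpr hij.symm),
    pair_comm, hκ]
  push_cast
  rw [add_sub_cancel_right]
  ring

end TypeIII

/-- The paper's `E_1`, `E_2`, `E_i` (`i ≥ 3`) are `E 0`, `E 1`, `E i` (`i ≥ 2`) here. -/
theorem newton_transformation_type_III
    (V : Type*) [AddCommGroup V] [Module ℝ V] [FiniteDimensional ℝ V]
    (n : ℕ) (hn : 2 ≤ n)
    (κ : Fin n → ℝ)
    (hκ : κ ⟨0, by omega⟩ = κ ⟨1, by omega⟩)
    (E : Module.Basis (Fin n) ℝ V)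
    (S : V →ₗ[ℝ] V)
    (hS0 : S (E ⟨0, by omega⟩) = κ ⟨0, by omega⟩ • E ⟨0, by omega⟩ + E ⟨1, by omega⟩)
    (hS1 : S (E ⟨1, by omega⟩) = κ ⟨0, by omega⟩ • E ⟨1, by omega⟩)
    (hSi : ∀ i : Fin n, 2 ≤ (i : ℕ) → S (E i) = κ i • E i)
    (a : ℕ → ℝ) (ha : ∀ k, a k = (LinearMap.charpoly S).coeff (n - k))
    (P : ℕ → V →ₗ[ℝ] V)
    (hP : ∀ k, P k = ∑ j ∈ Finset.range (k + 1), a (k - j) • S ^ j) :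
    ∀ k ≤ n,
      P k (E ⟨0, by omega⟩) =
          ((-1 : ℝ) ^ k * mu κ {⟨0, by omega⟩} (k : ℤ)) • E ⟨0, by omega⟩ +
          ((-1 : ℝ) ^ k * (-mu κ {⟨0, by omega⟩, ⟨1, by omega⟩} ((k : ℤ) - 1))) •
            E ⟨1, by omega⟩ ∧
      P k (E ⟨1, by omega⟩) =
          ((-1 : ℝ) ^ k * mu κ {⟨0, by omega⟩} (k : ℤ)) • E ⟨1, by omega⟩ ∧
      ∀ i : Fin n, 2 ≤ (i : ℕ) →
        P k (E i) = ((-1 : ℝ) ^ k * mu κ {i} (k : ℤ)) • E i := by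
  set i₀ : Fin n := ⟨0, by omega⟩
  set i₁ : Fin n := ⟨1, by omega⟩
  have hchar : S.charpoly = ∏ i, (X - C (κ i)) := by
    refine S.charpoly_eq_prod_of_sub_smul_mem_span E κ fun j ↦ ?_
    obtain hj | hj | hj : (j : ℕ) = 0 ∨ (j : ℕ) = 1 ∨ 2 ≤ (j : ℕ) := by omega
    · obtain rfl : j = i₀ := Fin.ext hj
      rw [hS0, add_sub_cancel_left]
      exact Submodule.subset_span ⟨i₁, Fin.lt_def.mpr zero_lt_one, rfl⟩
    · obtain rfl : j = i₁ := Fin.ext hj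
      simp [hS1, hκ]
    · simp [hSi j hj]
  intro k hk
  have hPk : P k = newtonTransformation (fun j ↦ (-1) ^ j * mu κ ∅ j) S k :=
    (hP k).trans <| sum_congr rfl fun j _ ↦ by
      rw [ha, hchar, coeff_prod_X_sub_C_eq_mu κ (by omega)]
  refine ⟨?_, ?_, fun i hi ↦ ?_⟩ <;> rw [hPk]
  · rw [newtonTransformation_apply_of_jordan _ hS0 hS1
      (d := fun k ↦ (-1) ^ k * -mu κ {i₀, i₁} (k - 1)) (by simp [mu])
      (neg_one_pow_mul_neg_mu_pair_succ κ (by simp [i₀, i₁]) hκ), newtonTransformation_mu]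
  · rw [newtonTransformation_apply_of_apply_eq_smul _ hS1, newtonTransformation_mu]
  · rw [newtonTransformation_apply_of_apply_eq_smul _ (hSi i hi), newtonTransformation_mu]
end

section
/- Let R be a linear endomorphism of a finite-dimensional real vector space whose minimal polynomial is exactly t² + a·t + b, let c ∈ {−1, +1}, and let d be a real number such that μ := d² + acd + b ≠ 0. Define S = −(1/|μ|^{1/2})·(R − cd·I). Then the minimal polynomial of S is t² − ((a + 2cd)/|μ|^{1/2})·t + (b + d² + acd)/|μ|, and its discriminant equals (a² − 4b)/|μ|. In particular, if a² − 4b ≤ 0, then S is not diagonalizable over ℝ. -/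
/-!
Since `R = cd - √|μ| • S`, substituting `cd - √|μ| X` into the minimal polynomial of `R` gives
`|μ|` times the claimed quadratic (using `c² = 1`), so that quadratic annihilates `S`. As `R` is
not a scalar, neither is `S`, so the quadratic is the minimal polynomial of `S`. When its
discriminant is `≤ 0`, its only possible real root is the double root, so an eigenbasis would make
`S` a scalar.
-/

open Polynomial

section Algebra

variable {K A : Type*} [Field K] [Ring A] [Algebra K A]

theorem notMem_range_algebraMap_of_two_le_natDegree_minpoly {x : A}
    (h : 2 ≤ (minpoly K x).natDegree) : x ∉ (algebraMap K A).range := by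
  intro hx
  cases subsingleton_or_nontrivial A with
  | inl _ => simp [minpoly.subsingleton] at h
  | inr _ => have := minpoly.natDegree_eq_one_iff.2 hx; omega

theorem smul_sub_smul_one_notMem_range_algebraMap {x : A}
    (hx : x ∉ (algebraMap K A).range) {α : K} (hα : α ≠ 0) (β : K) :
    α • (x - β • 1) ∉ (algebraMap K A).range := by
  rintro ⟨t, ht⟩
  refine hx ⟨α⁻¹ * t + β, ?_⟩
  rw [Algebra.algebraMap_eq_smul_one] at ht ⊢
  rw [add_smul, mul_smul, ht, smul_smul, inv_mul_cancel₀ hα, one_smul, sub_add_cancel]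

theorem minpoly_eq_of_monic_of_natDegree_eq_two {x : A} (hx : IsIntegral K x)
    (hxK : x ∉ (algebraMap K A).range) {p : K[X]} (hp : p.Monic) (hp2 : p.natDegree = 2)
    (hpx : aeval x p = 0) : minpoly K x = p := by
  have : Nontrivial A := ⟨x, algebraMap K A 0, fun h ↦ hxK ⟨0, h.symm⟩⟩
  refine (eq_of_monic_of_dvd_of_natDegree_le (minpoly.monic hx) hp (minpoly.dvd K x hpx) ?_).symm
  exact hp2 ▸ (minpoly.two_le_natDegree_iff hx).2 hxK

theorem aeval_eq_zero_of_comp_eq_C_mul {x y : A} {q r p : K[X]} (hq : aeval x q = 0)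
    (hxy : x = aeval y r) {k : K} (hk : k ≠ 0) (h : q.comp r = C k * p) : aeval y p = 0 := by
  rw [hxy, ← aeval_comp, h, ← smul_eq_C_mul, map_smul] at hq
  exact (smul_eq_zero.1 hq).resolve_left hk

end Algebra

theorem quadratic_comp_affine {K : Type*} [Field K] (a b β : K) {s : K} (hs : s ≠ 0) :
    (X ^ 2 + C a * X + C b).comp (C β - C s * X) =
      C (s ^ 2) * (X ^ 2 - C ((a + 2 * β) / s) * X + C ((β ^ 2 + a * β + b) / s ^ 2)) := by
  have h1 : s ^ 2 * ((a + 2 * β) / s) = s * (a + 2 * β) := by field_simp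
  have h2 : s ^ 2 * ((β ^ 2 + a * β + b) / s ^ 2) = β ^ 2 + a * β + b := by field_simp
  simp only [add_comp, pow_comp, X_comp, mul_comp, C_comp, mul_sub, mul_add, ← mul_assoc,
    ← C_mul, h1, h2]
  simp only [map_add, map_mul, map_pow, C_ofNat]
  ring

theorem not_exists_basis_eigenvectors_of_minpoly_eq {K V ι : Type*} [Field K] [LinearOrder K]
    [IsStrictOrderedRing K] [AddCommGroup V] [Module K V] {S : Module.End K V} {e f : K}
    (hS : minpoly K S = X ^ 2 - C e * X + C f) (hdisc : e ^ 2 - 4 * f ≤ 0) :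
    ¬ ∃ E : Module.Basis ι K V, ∀ i, ∃ t : K, S (E i) = t • E i := by
  rintro ⟨E, hE⟩
  have hSE : ∀ i, S (E i) = (e / 2) • E i := by
    intro i
    obtain ⟨t, ht⟩ := hE i
    have heig : S.HasEigenvalue t :=
      Module.End.hasEigenvalue_of_hasEigenvector ⟨Module.End.mem_eigenspace_iff.2 ht, E.ne_zero i⟩
    have hroot : t ^ 2 - e * t + f = 0 := by
      simpa [hS] using Module.End.isRoot_of_hasEigenvalue heig
    have : t = e / 2 := by nlinarith [sq_nonneg (2 * t - e)]
    rw [ht, this]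
  have hscalar : S ∈ (algebraMap K (Module.End K V)).range :=
    ⟨e / 2, E.ext fun i ↦ by simp [hSE, Algebra.algebraMap_eq_smul_one]⟩
  have hdeg : (minpoly K S).natDegree = 2 := by rw [hS]; compute_degree!
  exact notMem_range_algebraMap_of_two_le_natDegree_minpoly hdeg.ge hscalar

theorem minpoly_of_quadratic_shape_operator_general
    (V : Type*) [AddCommGroup V] [Module ℝ V] [FiniteDimensional ℝ V]
    (R : Module.End ℝ V) (a b : ℝ)
    (hR : minpoly ℝ R = X ^ 2 + C a * X + C b)
    (c : ℝ) (hc : c = -1 ∨ c = 1)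
    (d : ℝ) (μ : ℝ) (hμ : μ ≠ 0)
    (S : Module.End ℝ V)
    (hSdef : S = -(1 / Real.sqrt |μ|) • (R - (c * d) • (1 : Module.End ℝ V))) :
    minpoly ℝ S =
        X ^ 2 - C ((a + 2 * c * d) / Real.sqrt |μ|) * X +
          C ((b + d ^ 2 + a * c * d) / |μ|) ∧
    (-((a + 2 * c * d) / Real.sqrt |μ|)) ^ 2 -
        4 * ((b + d ^ 2 + a * c * d) / |μ|) = (a ^ 2 - 4 * b) / |μ| ∧
    (a ^ 2 - 4 * b ≤ 0 →
      ¬ ∃ E : Module.Basis (Fin (Module.finrank ℝ V)) ℝ V,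
          ∀ i, ∃ t : ℝ, S (E i) = t • E i) := by
  set s := Real.sqrt |μ|
  have hs : s ≠ 0 := Real.sqrt_ne_zero'.2 (abs_pos.2 hμ)
  have hs2 : s ^ 2 = |μ| := Real.sq_sqrt (abs_nonneg μ)
  have hcd : (c * d) ^ 2 = d ^ 2 := by rcases hc with rfl | rfl <;> ring
  have hdisc : (-((a + 2 * c * d) / s)) ^ 2 - 4 * ((b + d ^ 2 + a * c * d) / |μ|) =
      (a ^ 2 - 4 * b) / |μ| := by
    rw [← hs2]; field_simp; linear_combination 4 * hcd
  have hRS : R = aeval S (C (c * d) - C s * X) := by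
    simp only [hSdef, map_sub, map_mul, aeval_C, aeval_X, Algebra.algebraMap_eq_smul_one,
      smul_mul_assoc, one_mul]
    match_scalars <;> simp [hs]
  have hRdeg : (minpoly ℝ R).natDegree = 2 := by rw [hR]; compute_degree!
  have hRK : R ∉ (algebraMap ℝ (Module.End ℝ V)).range :=
    notMem_range_algebraMap_of_two_le_natDegree_minpoly hRdeg.ge
  have hmin : minpoly ℝ S = X ^ 2 - C ((a + 2 * c * d) / s) * X +
      C ((b + d ^ 2 + a * c * d) / |μ|) := by
    refine minpoly_eq_of_monic_of_natDegree_eq_two (Algebra.IsIntegral.isIntegral S)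
      (hSdef ▸ smul_sub_smul_one_notMem_range_algebraMap hRK (by simpa using hs) _)
      (by monicity!) (by compute_degree!)
      (aeval_eq_zero_of_comp_eq_C_mul (minpoly.aeval ℝ R) hRS (pow_ne_zero 2 hs) ?_)
    rw [hR, quadratic_comp_affine a b (c * d) hs, hs2, hcd]
    ring_nf
  refine ⟨hmin, hdisc, fun h ↦ not_exists_basis_eigenvectors_of_minpoly_eq hmin ?_⟩
  rw [← neg_sq, hdisc]
  exact div_nonpos_of_nonpos_of_nonneg h (abs_nonneg μ)

/-- If the minimal polynomial of `R` is exactly `t² + a·t + b`, `c = ±1` and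
`μ = d² + acd + b ≠ 0`, then the minimal polynomial of
`S = −(1/|μ|^{1/2})·(R − cd·I)` is
`t² − ((a + 2cd)/|μ|^{1/2})·t + (b + d² + acd)/|μ|`, its discriminant equals
`(a² − 4b)/|μ|`, and if `a² − 4b ≤ 0` then `S` is not diagonalizable over `ℝ`
(there is no basis of eigenvectors of `S`). -/
theorem minpoly_of_quadratic_shape_operator
    (V : Type*) [AddCommGroup V] [Module ℝ V] [FiniteDimensional ℝ V]
    (R : Module.End ℝ V) (a b : ℝ)
    (hR : minpoly ℝ R = X ^ 2 + C a * X + C b)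
    (c : ℝ) (hc : c = -1 ∨ c = 1)
    (d : ℝ) (μ : ℝ) (hμdef : μ = d ^ 2 + a * c * d + b) (hμ : μ ≠ 0)
    (S : Module.End ℝ V)
    (hSdef : S = -(1 / Real.sqrt |μ|) • (R - (c * d) • (1 : Module.End ℝ V))) :
    minpoly ℝ S =
        X ^ 2 - C ((a + 2 * c * d) / Real.sqrt |μ|) * X +
          C ((b + d ^ 2 + a * c * d) / |μ|) ∧
    (-((a + 2 * c * d) / Real.sqrt |μ|)) ^ 2 -
        4 * ((b + d ^ 2 + a * c * d) / |μ|) = (a ^ 2 - 4 * b) / |μ| ∧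
    (a ^ 2 - 4 * b ≤ 0 →
      ¬ ∃ E : Module.Basis (Fin (Module.finrank ℝ V)) ℝ V,
          ∀ i, ∃ t : ℝ, S (E i) = t • E i) :=
  minpoly_of_quadratic_shape_operator_general V R a b hR c hc d μ hμ S hSdef
end

section
/- Let S : ℝ → M_n(ℝ) be a differentiable matrix-valued function, and for each t let a_0(t) = 1, a_1(t), …, a_n(t) denote the coefficients of the characteristic polynomial det(x·I − S(t)) = Σ_{k=0}^n a_k(t) x^{n−k}, and let P_k(t) = Σ_{j=0}^k a_{k−j}(t)·S(t)^j denote the k-th Newton transformation of S(t). Then for every k = 0, …, n−1 the function a_{k+1} is differentiable and its derivative satisfies a_{k+1}'(t) = −tr(S'(t)·P_k(t)) for every t ∈ ℝ. -/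
/-!
Jacobi's formula gives `d/dt det (x • 1 - S t) = -tr (adj (x • 1 - S t) * S' t)` for every `x`.
From `P (k + 1) = A * P k + a (k + 1) • 1` and Cayley–Hamilton (`P n = 0`) one gets
`(X • 1 - A) * ∑ k < n, X ^ (n - 1 - k) • P k = charpoly A • 1`, hence
`adj (x • 1 - A) = ∑ k < n, x ^ (n - 1 - k) • P k`, so the derivative of `det (x • 1 - S t)` is
the polynomial in `x` with coefficients `-tr (S' t * P k)`. A polynomial of degree `< N` is
determined by its values at `N` points, so its coefficients are fixed linear combinations of these
values; this transfers the derivative from the values to the coefficients.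
-/

open Polynomial Finset

theorem Polynomial.hasDerivAt_coeff_of_hasDerivAt_eval {𝕜 : Type*} [NontriviallyNormedField 𝕜]
    {f : 𝕜 → 𝕜[X]} {q : 𝕜[X]} {N : ℕ} {t : 𝕜} (hf : ∀ s, (f s).degree < N) (hq : q.degree < N)
    (h : ∀ x, HasDerivAt (fun s => (f s).eval x) (q.eval x) t) (d : ℕ) :
    HasDerivAt (fun s => (f s).coeff d) (q.coeff d) t := by
  classical
  set nodes := (range N).map (Infinite.natEmbedding 𝕜)
  have coeff_eq : ∀ p : 𝕜[X], p.degree < N →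
      p.coeff d = ∑ x ∈ nodes, p.eval x * (Lagrange.basis nodes id x).coeff d := by
    intro p hp
    conv_lhs => rw [Lagrange.eq_interpolate (f := p) (s := nodes) (v := id) (Set.injOn_id _)
      (by simpa [nodes])]
    simp [Lagrange.interpolate_apply, finsetSum_coeff]
  simp_rw [coeff_eq _ (hf _), coeff_eq q hq]
  exact HasDerivAt.fun_sum fun x _ => (h x).mul_const _

namespace Matrix

variable {R ι : Type*} [CommRing R] [Fintype ι] [DecidableEq ι] (A : Matrix ι ι R)

lemma det_updateRow_eq_sum (k : ι) (v : ι → R) :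
    (A.updateRow k v).det = ∑ i, v i * A.adjugate i k := by
  rw [← cramer_transpose_apply, cramer_eq_adjugate_mulVec, ← adjugate_transpose]
  simp [mulVec, dotProduct, mul_comm]

lemma sum_det_updateRow_eq_trace (B : Matrix ι ι R) :
    ∑ k, (A.updateRow k (B k)).det = (A.adjugate * B).trace := by
  simp only [det_updateRow_eq_sum, trace, diag, mul_apply]
  rw [sum_comm]
  simp [mul_comm]

theorem hasDerivAt_det {𝕜 : Type*} [NontriviallyNormedField 𝕜] {M : 𝕜 → Matrix ι ι 𝕜}
    {M' : Matrix ι ι 𝕜} {t : 𝕜} (h : ∀ i j, HasDerivAt (fun s => M s i j) (M' i j) t) :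
    HasDerivAt (fun s => (M s).det) ((M t).adjugate * M').trace t := by
  let D : ContinuousMultilinearMap 𝕜 (fun _ : ι => ι → 𝕜) 𝕜 :=
    ⟨(detRowAlternating : (ι → 𝕜) [⋀^ι]→ₗ[𝕜] 𝕜).toMultilinearMap, continuous_id.matrix_det⟩
  have hM : HasDerivAt (fun s => of.symm (M s)) (of.symm M') t :=
    hasDerivAt_pi.2 fun i => hasDerivAt_pi.2 (h i)
  refine ((D.hasFDerivAt (of.symm (M t))).comp_hasDerivAt t hM).congr_deriv ?_
  rw [ContinuousMultilinearMap.linearDeriv_apply, ← sum_det_updateRow_eq_trace]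
  rfl

lemma charpoly_coeff_card : A.charpoly.coeff (Fintype.card ι) = 1 := by
  have h := charpoly.univ_coeff_eval₂Hom ι (RingHom.id R) (fun p => A p.1 p.2) (Fintype.card ι)
  rw [charpoly.univ_coeff_card, map_one] at h
  exact h.symm

lemma charpoly_natDegree_lt : A.charpoly.natDegree < Fintype.card ι + 1 := by
  rcases subsingleton_or_nontrivial R with _ | _
  · simp [natDegree_of_subsingleton]
  · simp

lemma charpoly_eq_X_pow_add_sum : A.charpoly = X ^ Fintype.card ι +
    ∑ k ∈ range (Fintype.card ι),
      C (A.charpoly.coeff (Fintype.card ι - (k + 1))) * X ^ (Fintype.card ι - 1 - k) := by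
  conv_lhs => rw [as_sum_range_C_mul_X_pow' _ A.charpoly_natDegree_lt, sum_range_succ,
    charpoly_coeff_card, C_1, one_mul, add_comm, ← sum_range_reflect]
  congr 1
  refine sum_congr rfl fun k _ => ?_
  rw [Nat.sub_sub, add_comm 1 k]

/-- `A.charpoly.coeff (Fintype.card ι - i)` is the coefficient `a_i` of `X ^ (n - i)`. -/
noncomputable def newtonTransformation (k : ℕ) : Matrix ι ι R :=
  ∑ j ∈ range (k + 1), A.charpoly.coeff (Fintype.card ι - (k - j)) • A ^ j

@[simp]
lemma newtonTransformation_zero : A.newtonTransformation 0 = 1 := by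
  simp [newtonTransformation, charpoly_coeff_card]

lemma newtonTransformation_succ (k : ℕ) :
    A.newtonTransformation (k + 1) =
      A * A.newtonTransformation k + A.charpoly.coeff (Fintype.card ι - (k + 1)) • 1 := by
  rw [newtonTransformation, sum_range_succ', newtonTransformation, mul_sum]
  simp [pow_succ']

@[simp]
lemma newtonTransformation_card : A.newtonTransformation (Fintype.card ι) = 0 := by
  rw [← aeval_self_charpoly A, aeval_eq_sum_range' A.charpoly_natDegree_lt, newtonTransformation]
  refine sum_congr rfl fun j hj => ?_
  rw [Nat.sub_sub_self (mem_range_succ_iff.mp hj)]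

lemma charmatrix_mul_map_newtonTransformation (k : ℕ) :
    A.charmatrix * (A.newtonTransformation k).map C =
      (X : R[X]) • (A.newtonTransformation k).map C - (A.newtonTransformation (k + 1)).map C +
        C (A.charpoly.coeff (Fintype.card ι - (k + 1))) • 1 := by
  rw [newtonTransformation_succ, charmatrix, sub_mul, RingHom.mapMatrix_apply, ← Matrix.map_mul]
  have hc : ((A.charpoly.coeff (Fintype.card ι - (k + 1))) • (1 : Matrix ι ι R)).map C =
      C (A.charpoly.coeff (Fintype.card ι - (k + 1))) • 1 := by
    simp [smul_one_eq_diagonal]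
  rw [Matrix.map_add _ (map_add C), hc, scalar_apply, ← smul_eq_diagonal_mul]
  abel

lemma charmatrix_mul_sum_newtonTransformation :
    A.charmatrix * ∑ k ∈ range (Fintype.card ι),
      (X : R[X]) ^ (Fintype.card ι - 1 - k) • (A.newtonTransformation k).map C =
        A.charpoly • 1 := by
  set n := Fintype.card ι
  set T : ℕ → Matrix ι ι R[X] := fun k => (X : R[X]) ^ (n - k) • (A.newtonTransformation k).map C
  have hterm : ∀ k ∈ range n,
      A.charmatrix * ((X : R[X]) ^ (n - 1 - k) • (A.newtonTransformation k).map C) =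
        T k - T (k + 1) + (C (A.charpoly.coeff (n - (k + 1))) * X ^ (n - 1 - k)) • 1 := by
    intro k hk
    have hk' : n - 1 - k + 1 = n - k := by have := mem_range.mp hk; omega
    rw [mul_smul_comm, charmatrix_mul_map_newtonTransformation, smul_add, smul_sub, smul_smul,
      ← pow_succ, hk', smul_smul, mul_comm, Nat.sub_sub, add_comm 1 k]
  rw [mul_sum, sum_congr rfl hterm, sum_add_distrib, sum_range_sub', ← sum_smul]
  conv_rhs => rw [charpoly_eq_X_pow_add_sum, add_smul]
  simp [T, n]

theorem adjugate_charmatrix :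
    A.charmatrix.adjugate = ∑ k ∈ range (Fintype.card ι),
      (X : R[X]) ^ (Fintype.card ι - 1 - k) • (A.newtonTransformation k).map C := by
  set Q := ∑ k ∈ range (Fintype.card ι),
    (X : R[X]) ^ (Fintype.card ι - 1 - k) • (A.newtonTransformation k).map C
  have h : A.charpoly • A.charmatrix.adjugate = A.charpoly • Q :=
    calc A.charpoly • A.charmatrix.adjugate
        = A.charmatrix.adjugate * (A.charmatrix * Q) := by
          rw [charmatrix_mul_sum_newtonTransformation, mul_smul_comm, mul_one]
      _ = A.charpoly • Q := by
          rw [← mul_assoc, adjugate_mul, charpoly, smul_mul_assoc, one_mul]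
  ext i j : 1
  exact A.charpoly_monic.isRegular.left (congr_fun (congr_fun h i) j)

lemma evalRingHom_mapMatrix_charmatrix (x : R) :
    (evalRingHom x).mapMatrix A.charmatrix = scalar ι x - A := by
  ext i j
  obtain rfl | hij := eq_or_ne i j <;> simp [*]

lemma adjugate_scalar_sub (x : R) :
    (scalar ι x - A).adjugate =
      ∑ k ∈ range (Fintype.card ι), x ^ (Fintype.card ι - 1 - k) • A.newtonTransformation k := by
  rw [← evalRingHom_mapMatrix_charmatrix, ← RingHom.map_adjugate, adjugate_charmatrix, map_sum]
  ext i j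
  simp only [RingHom.mapMatrix_apply, coe_evalRingHom, sum_apply, map_apply, smul_apply,
    smul_eq_mul, X_pow_mul_C, eval_mul, eval_C, eval_pow, eval_X]
  exact sum_congr rfl fun _ _ => mul_comm _ _

theorem hasDerivAt_charpoly_coeff {𝕜 : Type*} [NontriviallyNormedField 𝕜]
    {M : 𝕜 → Matrix ι ι 𝕜} {M' : Matrix ι ι 𝕜} {t : 𝕜}
    (h : ∀ i j, HasDerivAt (fun s => M s i j) (M' i j) t) {k : ℕ} (hk : k < Fintype.card ι) :
    HasDerivAt (fun s => (M s).charpoly.coeff (Fintype.card ι - (k + 1)))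
      (-(M' * (M t).newtonTransformation k).trace) t := by
  set n := Fintype.card ι
  let q : 𝕜[X] := ∑ m ∈ range n, C (-(M' * (M t).newtonTransformation m).trace) * X ^ (n - 1 - m)
  have hq_degree : q.degree < ↑(n + 1) := by
    refine (degree_sum_le _ _).trans_lt ((Finset.sup_lt_iff (WithBot.bot_lt_coe _)).2 fun m _ => ?_)
    exact (degree_C_mul_X_pow_le _ _).trans_lt (by exact_mod_cast (by omega : n - 1 - m < n + 1))
  have hq_eval : ∀ x, q.eval x = ((scalar ι x - M t).adjugate * -M').trace := by
    intro x
    rw [adjugate_scalar_sub, sum_mul, trace_sum]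
    simp only [q, trace_mul_comm M', map_neg, neg_mul, sum_neg_distrib, eval_neg, eval_finsetSum,
      eval_mul, eval_C, eval_pow, eval_X, mul_neg, Algebra.smul_mul_assoc, trace_neg, trace_smul,
      smul_eq_mul, neg_inj]
    exact sum_congr rfl fun _ _ => mul_comm _ _
  have hq_coeff : q.coeff (n - (k + 1)) = -(M' * (M t).newtonTransformation k).trace := by
    simp only [q, finsetSum_coeff, coeff_C_mul_X_pow]
    rw [sum_eq_single k (fun m hm _ => if_neg (by have := mem_range.mp hm; omega))
      (fun hk' => absurd (mem_range.mpr hk) hk'), if_pos (by omega)]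
  refine (Polynomial.hasDerivAt_coeff_of_hasDerivAt_eval (N := n + 1) (fun s => ?_) hq_degree
    (fun x => ?_) _).congr_deriv hq_coeff
  · rw [charpoly_degree_eq_dim]
    exact_mod_cast n.lt_succ_self
  · simp_rw [eval_charpoly, hq_eval]
    exact hasDerivAt_det fun i j => by simpa using (h i j).const_sub (scalar ι x i j)

end Matrix

/-- If `S : ℝ → M_n(ℝ)` is differentiable, `a_k(t)` are the coefficients of the
characteristic polynomial `det(x·I − S(t)) = Σ_{k=0}^n a_k(t) x^{n−k}` and
`P_k(t) = Σ_{j=0}^k a_{k−j}(t)·S(t)^j` are the Newton transformations, then for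
`k = 0, …, n−1` the function `a_{k+1}` is differentiable with
`a_{k+1}'(t) = −tr(S'(t)·P_k(t))`. -/
theorem deriv_charpoly_coeff_eq_neg_trace
    (n : ℕ) (S : ℝ → Matrix (Fin n) (Fin n) ℝ)
    (hS : ∀ i j, Differentiable ℝ fun t => S t i j)
    (a : ℝ → ℕ → ℝ) (ha : ∀ t k, a t k = (Matrix.charpoly (S t)).coeff (n - k))
    (P : ℝ → ℕ → Matrix (Fin n) (Fin n) ℝ)
    (hP : ∀ t k, P t k = ∑ j ∈ Finset.range (k + 1), a t (k - j) • S t ^ j) :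
    ∀ k < n,
      Differentiable ℝ (fun t => a t (k + 1)) ∧
      ∀ t : ℝ, deriv (fun s => a s (k + 1)) t =
        - Matrix.trace ((Matrix.of fun i j => deriv (fun s => S s i j) t) * P t k) := by
  intro k hk
  have hP_newton : ∀ t, P t k = (S t).newtonTransformation k := fun t => by
    simp [hP, ha, Matrix.newtonTransformation]
  have hderiv : ∀ t, HasDerivAt (fun s => a s (k + 1))
      (-((Matrix.of fun i j => deriv (fun s => S s i j) t) * P t k).trace) t := fun t => by
    simpa [ha, hP_newton] using Matrix.hasDerivAt_charpoly_coeff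
      (M' := Matrix.of fun i j => deriv (fun s => S s i j) t) (fun i j => (hS i j t).hasDerivAt)
      (by simpa using hk)
  exact ⟨fun t => (hderiv t).differentiableAt, fun t => (hderiv t).deriv⟩
end
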